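/- For two fully-connected layers with the same 1-Lipschitz activation $\sigma$, $\|\mathrm{FC}^{\sigma}_{W,b}(x) - \mathrm{FC}^{\sigma}_{W',b'}(x)\|_\infty \le (\|W\|_0 + \|W'\|_0)\|W - W'\|_\infty \|x\|_\infty + \|b - b'\|_\infty$ for any input $x$. -/

import Mathlib

noncomputable section
open Finset

namespace CNNPaper

/-- ReLU activation. -/
def relu (u : ℝ) : ℝ := max u 0

/-- One-sided padding, stride-one convolution operator `L^w`. -/
def conv (D K I J : ℕ) (w : Fin K → Fin J → Fin I → ℝ)
    (x : Fin D → Fin I → ℝ) : Fin D → Fin J → ℝ :=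
  fun β j => ∑ α : Fin D, ∑ i : Fin I,
    (if h : (β : ℕ) ≤ (α : ℕ) ∧ (α : ℕ) - (β : ℕ) < K
      then w ⟨(α : ℕ) - (β : ℕ), h.2⟩ j i else 0) * x α i

/-- sup (entrywise maximal absolute value) norm of a finite family of reals. -/
def supNorm {ι : Type*} [Fintype ι] (f : ι → ℝ) : ℝ := ⨆ i, |f i|

/-- sup norm of a vector. -/
def vNorm {n : ℕ} (v : Fin n → ℝ) : ℝ := supNorm v

/-- sup norm of a matrix / signal. -/
def mNorm {D I : ℕ} (x : Fin D → Fin I → ℝ) : ℝ :=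
  supNorm (fun p : Fin D × Fin I => x p.1 p.2)

/-- sup norm of a filter. -/
def wNorm {K J I : ℕ} (w : Fin K → Fin J → Fin I → ℝ) : ℝ :=
  supNorm (fun p : Fin K × Fin J × Fin I => w p.1 p.2.1 p.2.2)

/-- Operator norm of `L^w` with respect to sup norms. -/
def convOpNorm (D K I J : ℕ) (w : Fin K → Fin J → Fin I → ℝ) : ℝ :=
  ⨆ x : {x : Fin D → Fin I → ℝ // mNorm x ≤ 1}, mNorm (conv D K I J w x.1)

/-- A convolutional layer `x ↦ σ(L^w(x) - 1_D ⊗ b)`. -/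
def convLayer (D K I J : ℕ) (σ : ℝ → ℝ) (w : Fin K → Fin J → Fin I → ℝ)
    (b : Fin J → ℝ) (x : Fin D → Fin I → ℝ) : Fin D → Fin J → ℝ :=
  fun β j => σ (conv D K I J w x β j - b j)

/-- A stack of convolutional layers; the activation may depend on the layer index. -/
def forwardσ (D : ℕ) (C K : ℕ → ℕ) (σ : ℕ → ℝ → ℝ)
    (w : (l : ℕ) → Fin (K l) → Fin (C (l + 1)) → Fin (C l) → ℝ)
    (b : (l : ℕ) → Fin (C (l + 1)) → ℝ) :
    (n : ℕ) → (Fin D → Fin (C 0) → ℝ) → Fin D → Fin (C n) → ℝ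
  | 0, x => x
  | n + 1, x => convLayer D (K n) (C n) (C (n + 1)) (σ n) (w n) (b n)
      (forwardσ D C K σ w b n x)

/-- A stack of convolutional layers with a common activation. -/
def forward (D : ℕ) (C K : ℕ → ℕ) (σ : ℝ → ℝ)
    (w : (l : ℕ) → Fin (K l) → Fin (C (l + 1)) → Fin (C l) → ℝ)
    (b : (l : ℕ) → Fin (C (l + 1)) → ℝ) (n : ℕ)
    (x : Fin D → Fin (C 0) → ℝ) : Fin D → Fin (C n) → ℝ :=
  forwardσ D C K (fun _ => σ) w b n x

/-- Activation pattern of a residual block of depth `L`: ReLU except on the last layer. -/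
def blockσ (L : ℕ) : ℕ → ℝ → ℝ := fun l => if l + 1 = L then (id : ℝ → ℝ) else relu

/-- A fully-connected layer `x ↦ σ(W vec(x) - b)`. -/
def fcLayer (D C C' : ℕ) (σ : ℝ → ℝ) (W : Fin C' → Fin D → Fin C → ℝ)
    (b : Fin C' → ℝ) (x : Fin D → Fin C → ℝ) : Fin C' → ℝ :=
  fun j => σ ((∑ β : Fin D, ∑ i : Fin C, W j β i * x β i) - b j)

/-- `‖W‖₀`: the number of non-zero entries of `W`. -/
def l0Norm {C' D C : ℕ} (W : Fin C' → Fin D → Fin C → ℝ) : ℕ :=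
  (Finset.univ.filter (fun p : Fin C' × Fin D × Fin C => W p.1 p.2.1 p.2.2 ≠ 0)).card

section FiniteFamily

variable {ι κ : Type*} [Fintype ι] [Fintype κ]

lemma supNorm_nonneg (f : ι → ℝ) : 0 ≤ supNorm f :=
  Real.iSup_nonneg fun _ => abs_nonneg _

lemma le_supNorm (f : ι → ℝ) (i : ι) : |f i| ≤ supNorm f :=
  le_ciSup (f := fun i => |f i|) (Set.finite_range _).bddAbove i

lemma supNorm_le {f : ι → ℝ} {M : ℝ} (hM : 0 ≤ M) (h : ∀ i, |f i| ≤ M) : supNorm f ≤ M :=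
  Real.iSup_le h hM

lemma supNorm_comp_le (f : ι → ℝ) (e : κ → ι) : supNorm (f ∘ e) ≤ supNorm f :=
  supNorm_le (supNorm_nonneg f) fun k => le_supNorm f (e k)

lemma abs_sum_mul_le_card_mul_supNorm_mul_supNorm (a x : ι → ℝ) :
    |∑ i, a i * x i| ≤ #{i | a i ≠ 0} * supNorm a * supNorm x := by
  have hsupp : ∑ i with a i ≠ 0, a i * x i = ∑ i, a i * x i :=
    sum_filter_of_ne fun i _ h => left_ne_zero_of_mul h
  calc |∑ i, a i * x i| = |∑ i with a i ≠ 0, a i * x i| := by rw [hsupp]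
    _ ≤ ∑ i with a i ≠ 0, |a i * x i| := abs_sum_le_sum_abs _ _
    _ ≤ ∑ i with a i ≠ 0, supNorm a * supNorm x := by
        gcongr with i
        rw [abs_mul]
        exact mul_le_mul (le_supNorm a i) (le_supNorm x i) (abs_nonneg _) (supNorm_nonneg a)
    _ = #{i | a i ≠ 0} * supNorm a * supNorm x := by rw [sum_const, nsmul_eq_mul, mul_assoc]

lemma card_filter_comp_ne_zero_le (f : ι → ℝ) {e : κ → ι}
    (he : Function.Injective e) : #{k | f (e k) ≠ 0} ≤ #{i | f i ≠ 0} :=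
  card_le_card_of_injOn e (fun _ hk => by simpa using hk) he.injOn

lemma card_filter_sub_ne_zero_le (f g : ι → ℝ) :
    #{i | f i - g i ≠ 0} ≤ #{i | f i ≠ 0} + #{i | g i ≠ 0} := by
  classical
  refine (card_le_card fun i hi => ?_).trans (card_union_le _ _)
  simp only [mem_filter, mem_univ, true_and, mem_union] at hi ⊢
  by_contra! h
  exact hi (by rw [h.1, h.2, sub_zero])

end FiniteFamily

section FC

variable {C' D C : ℕ}

lemma vNorm_nonneg (v : Fin C' → ℝ) : 0 ≤ vNorm v := supNorm_nonneg v

lemma mNorm_nonneg (x : Fin D → Fin C → ℝ) : 0 ≤ mNorm x := supNorm_nonneg _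

lemma wNorm_nonneg (W : Fin C' → Fin D → Fin C → ℝ) : 0 ≤ wNorm W := supNorm_nonneg _

lemma l0Norm_sub_le (W W' : Fin C' → Fin D → Fin C → ℝ) :
    l0Norm (fun j β i => W j β i - W' j β i) ≤ l0Norm W + l0Norm W' :=
  card_filter_sub_ne_zero_le (fun p : Fin C' × Fin D × Fin C => W p.1 p.2.1 p.2.2) _

lemma abs_sum_row_mul_le (W : Fin C' → Fin D → Fin C → ℝ) (x : Fin D → Fin C → ℝ)
    (j : Fin C') : |∑ β, ∑ i, W j β i * x β i| ≤ l0Norm W * wNorm W * mNorm x := by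
  set w := fun p : Fin C' × Fin D × Fin C => W p.1 p.2.1 p.2.2
  have hrow : Function.Injective (fun p : Fin D × Fin C => (j, p)) := fun _ _ h => (Prod.mk.inj h).2
  rw [← Fintype.sum_prod_type' (fun β i => W j β i * x β i)]
  calc |∑ p : Fin D × Fin C, W j p.1 p.2 * x p.1 p.2|
      ≤ #{p : Fin D × Fin C | W j p.1 p.2 ≠ 0} * supNorm (fun p : Fin D × Fin C => W j p.1 p.2) *
          mNorm x :=
        abs_sum_mul_le_card_mul_supNorm_mul_supNorm _ (fun p : Fin D × Fin C => x p.1 p.2)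
    _ ≤ l0Norm W * wNorm W * mNorm x := by
        gcongr
        · exact supNorm_nonneg _
        · exact supNorm_nonneg _
        · exact card_filter_comp_ne_zero_le w hrow
        · exact supNorm_comp_le w (fun p : Fin D × Fin C => (j, p))

end FC

/-- difference bound for two fully-connected layers with the same
`1`-Lipschitz activation. -/
theorem fcLayer_param_diff (D C C' : ℕ) (σ : ℝ → ℝ)
    (hσ : ∀ u v : ℝ, |σ u - σ v| ≤ |u - v|)
    (W W' : Fin C' → Fin D → Fin C → ℝ) (b b' : Fin C' → ℝ) (x : Fin D → Fin C → ℝ) :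
    vNorm (fun j => fcLayer D C C' σ W b x j - fcLayer D C C' σ W' b' x j) ≤
      ((l0Norm W : ℝ) + (l0Norm W' : ℝ)) * wNorm (fun j β i => W j β i - W' j β i) * mNorm x +
        vNorm (fun j => b j - b' j) := by
  have hw := wNorm_nonneg (fun j β i => W j β i - W' j β i)
  have hx := mNorm_nonneg x
  have hb := vNorm_nonneg (fun j => b j - b' j)
  refine supNorm_le (by positivity) fun j => ?_
  have hlin : ∑ β, ∑ i, (W j β i - W' j β i) * x β i =
      ∑ β, ∑ i, W j β i * x β i - ∑ β, ∑ i, W' j β i * x β i := by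
    simp only [sub_mul, sum_sub_distrib]
  calc |fcLayer D C C' σ W b x j - fcLayer D C C' σ W' b' x j|
      ≤ |(∑ β, ∑ i, W j β i * x β i - b j) - (∑ β, ∑ i, W' j β i * x β i - b' j)| := hσ _ _
    _ = |∑ β, ∑ i, (W j β i - W' j β i) * x β i - (b j - b' j)| := by
        rw [hlin, sub_sub_sub_comm]
    _ ≤ |∑ β, ∑ i, (W j β i - W' j β i) * x β i| + |b j - b' j| := abs_sub _ _
    _ ≤ l0Norm (fun j β i => W j β i - W' j β i) * wNorm (fun j β i => W j β i - W' j β i) *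
          mNorm x + vNorm (fun j => b j - b' j) :=
        add_le_add (abs_sum_row_mul_le (fun j β i => W j β i - W' j β i) x j)
          (le_supNorm (fun j => b j - b' j) j)
    _ ≤ _ := by
        gcongr
        exact_mod_cast l0Norm_sub_le W W'

end CNNPaper
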